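/- Curry's fixed point combinator Y ≡ λf.(λx.f(xx))(λx.f(xx)) can be assigned, for every n ≥ 1 and all types τ₁,…,τₙ, the type ((ω→τ₁) ∩ (τ₁→τ₂) ∩ ⋯ ∩ (τ_{n-1}→τₙ)) → τₙ in the BCD intersection type assignment system. -/
import Mathlib


/-- BCD intersection types: σ ::= α | t | ω | σ→τ | σ∩τ. -/
inductive Ty : Type
  | tvar : ℕ → Ty
  | tconst : ℕ → Ty
  | omega : Ty
  | arrow : Ty → Ty → Ty
  | inter : Ty → Ty → Ty

/-- The BCD subtyping preorder. -/
inductive Subt : Ty → Ty → Prop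
  | refl (σ) : Subt σ σ
  | trans {σ τ ρ} : Subt σ τ → Subt τ ρ → Subt σ ρ
  | top (σ) : Subt σ .omega
  | omegaArrow : Subt .omega (.arrow .omega .omega)
  | interLeft (σ τ) : Subt (.inter σ τ) σ
  | interRight (σ τ) : Subt (.inter σ τ) τ
  | arrowInter (σ τ₁ τ₂) : Subt (.inter (.arrow σ τ₁) (.arrow σ τ₂)) (.arrow σ (.inter τ₁ τ₂))
  | interGlb {σ τ₁ τ₂} : Subt σ τ₁ → Subt σ τ₂ → Subt σ (.inter τ₁ τ₂)
  | arrowMono {σ₁ σ₂ τ₁ τ₂} : Subt σ₂ σ₁ → Subt τ₁ τ₂ → Subt (.arrow σ₁ τ₁) (.arrow σ₂ τ₂)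

/-- Pure untyped λ-terms. -/
inductive Tm : Type
  | var : ℕ → Tm
  | lam : ℕ → Tm → Tm
  | app : Tm → Tm → Tm

/-- The BCD intersection type assignment system. -/
inductive Der : (ℕ → Ty) → Tm → Ty → Prop
  | var (Γ x) : Der Γ (.var x) (Γ x)
  | lamI {Γ x M σ τ} : Der (Function.update Γ x σ) M τ → Der Γ (.lam x M) (.arrow σ τ)
  | appE {Γ M N σ τ} : Der Γ M (.arrow σ τ) → Der Γ N σ → Der Γ (.app M N) τ
  | top (Γ M) : Der Γ M .omega
  | interI {Γ M σ τ} : Der Γ M σ → Der Γ M τ → Der Γ M (.inter σ τ)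
  | sub {Γ M σ τ} : Der Γ M σ → Subt σ τ → Der Γ M τ

/-- (τ→τ₁) ∩ (τ₁→τ₂) ∩ ⋯ ∩ (τ_{n-1}→τₙ) for the list [τ₁,…,τₙ]. -/
def chainFrom : Ty → List Ty → Ty
  | _, [] => .omega
  | τ, [τ'] => .arrow τ τ'
  | τ, τ' :: rest => .inter (.arrow τ τ') (chainFrom τ' rest)

/-- Curry's fixed point combinator Y ≡ λf.(λx.f(xx))(λx.f(xx)). -/
def Ycomb : Tm :=
  .lam 0 (.app (.lam 1 (.app (.var 0) (.app (.var 1) (.var 1))))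
               (.lam 1 (.app (.var 0) (.app (.var 1) (.var 1)))))

/-- The body W = λx. f (x x) of the Y combinator. -/
def Wtm : Tm := .lam 1 (.app (.var 0) (.app (.var 1) (.var 1)))

/-- accumulated intersection of the self-application types -/
def Bty : Ty → List Ty → Ty
  | b, [] => b
  | b, τ :: rest => Bty (.inter b (.arrow b τ)) rest

lemma chain_head (σ τ : Ty) (rest : List Ty) :
    Subt (chainFrom σ (τ :: rest)) (.arrow σ τ) := by
  cases rest with
  | nil => exact .refl _
  | cons a r => exact .interLeft _ _

lemma chain_tail (σ τ : Ty) (rest : List Ty) :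
    Subt (chainFrom σ (τ :: rest)) (chainFrom τ rest) := by
  cases rest with
  | nil => exact .top _
  | cons a r => exact .interRight _ _

lemma mainW (l : List Ty) : ∀ (σ b : Ty) (Γ : ℕ → Ty),
    Subt (Γ 0) (chainFrom σ l) →
    Der (Function.update Γ 1 b) (.app (.var 1) (.var 1)) σ →
    Der Γ Wtm b →
    Der Γ Wtm (Bty b l) := by
  induction l with
  | nil => intro σ b Γ _ _ hW; exact hW
  | cons τ rest ih =>
      intro σ b Γ hsub hxx hW
      have hf : Der (Function.update Γ 1 b) (.var 0) (.arrow σ τ) := by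
        have h0 := Der.var (Function.update Γ 1 b) 0
        rw [Function.update_of_ne (by decide)] at h0
        exact h0.sub (hsub.trans (chain_head σ τ rest))
      have hWarr : Der Γ Wtm (.arrow b τ) := Der.lamI (Der.appE hf hxx)
      apply ih τ (.inter b (.arrow b τ)) Γ (hsub.trans (chain_tail σ τ rest)) _
        (Der.interI hW hWarr)
      · have hx := Der.var (Function.update Γ 1 (.inter b (.arrow b τ))) 1
        rw [Function.update_self] at hx
        exact Der.appE (hx.sub (.interRight _ _)) (hx.sub (.interLeft _ _))

lemma bty_last : ∀ (l : List Ty) (h : l ≠ []) (b : Ty),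
    ∃ c, Subt (Bty b l) c ∧ Subt (Bty b l) (.arrow c (l.getLast h)) := by
  intro l
  induction l with
  | nil => intro h; exact absurd rfl h
  | cons τ rest ih =>
      intro h b
      cases rest with
      | nil =>
          exact ⟨b, .interLeft _ _, .interRight _ _⟩
      | cons a r =>
          obtain ⟨c, h1, h2⟩ := ih (by simp) (.inter b (.arrow b τ))
          exact ⟨c, h1, h2⟩

/-- Y can be assigned
((ω→τ₁) ∩ (τ₁→τ₂) ∩ ⋯ ∩ (τ_{n-1}→τₙ)) → τₙ for every n ≥ 1 and all τ₁,…,τₙ. -/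
theorem Y_typing (Γ : ℕ → Ty) (l : List Ty) (h : l ≠ []) :
    Der Γ Ycomb (.arrow (chainFrom .omega l) (l.getLast h)) := by
  set Γ' := Function.update Γ 0 (chainFrom .omega l) with hΓ'
  have hW : Der Γ' Wtm (Bty .omega l) := by
    apply mainW l .omega .omega Γ' _ (Der.top _ _) (Der.top _ _)
    rw [hΓ', Function.update_self]
    exact .refl _
  obtain ⟨c, h1, h2⟩ := bty_last l h .omega
  exact Der.lamI (Der.appE (hW.sub h2) (hW.sub h1))
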